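/- arXiv:2111.12601 — 8 statements merged into one kernel-verified Lean document; each statement's English description precedes it below -/
import Mathlib

section
/- Let 𝓗 be a complex Hilbert space and H, K positive bounded operators on 𝓗 with H nonsingular (injective). Then the equation XHX = K has at most one positive bounded solution X. -/
/-!
Put `S = √H`. Conjugating by `S` turns `XHX = K` into `(SXS)² = SKS`, so `SXS` is the positive
square root of `SKS` and is therefore determined by `K`. Since `S² = H` is injective, so is `S`;
being self-adjoint, `S` can then be cancelled on both sides of `SXS = SYS`.
-/

namespace CFC

variable {A : Type*} [PartialOrder A] [NonUnitalRing A] [TopologicalSpace A] [StarRing A]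
  [Module ℝ A] [SMulCommClass ℝ A A] [IsScalarTower ℝ A A] [StarOrderedRing A]
  [NonUnitalContinuousFunctionalCalculus ℝ A IsSelfAdjoint] [NonnegSpectrumClass ℝ A]
  [IsSemitopologicalRing A] [T2Space A]

theorem sqrt_conj_eq_of_mul_mul_eq {h x y : A} (hh : 0 ≤ h) (hx : 0 ≤ x) (hy : 0 ≤ y)
    (hxy : x * h * x = y * h * y) : sqrt h * x * sqrt h = sqrt h * y * sqrt h := by
  have hs : IsSelfAdjoint (sqrt h) := (sqrt_nonneg h).isSelfAdjoint
  have conj_sq (z : A) :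
      (sqrt h * z * sqrt h) * (sqrt h * z * sqrt h) = sqrt h * (z * h * z) * sqrt h := by
    simp only [mul_assoc]
    rw [← mul_assoc (sqrt h) (sqrt h), sqrt_mul_sqrt_self h hh]
  rw [← mul_self_eq_mul_self_iff _ _ (hs.conjugate_nonneg hx) (hs.conjugate_nonneg hy),
    conj_sq, conj_sq, hxy]

end CFC

theorem IsSelfAdjoint.eq_of_conj_eq {R : Type*} [Semigroup R] [StarMul R] {s x y : R}
    (hs : IsSelfAdjoint s) (hs_reg : IsLeftRegular s) (hx : IsSelfAdjoint x)
    (hy : IsSelfAdjoint y) (h : s * x * s = s * y * s) : x = y := by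
  have hxs : x * s = y * s := hs_reg (by simpa only [mul_assoc] using h)
  have hsx : s * x = s * y := by
    simpa only [star_mul, hs.star_eq, hx.star_eq, hy.star_eq] using congrArg star hxs
  exact hs_reg hsx

theorem ContinuousLinearMap.isLeftRegular_of_injective {R M : Type*} [Semiring R]
    [TopologicalSpace M] [AddCommMonoid M] [Module R M] {S : M →L[R] M}
    (hS : Function.Injective S) : IsLeftRegular S :=
  fun _ _ h => ext fun v => hS (congrArg (fun T : M →L[R] M => T v) h)

theorem stmt_2_general {𝓗 : Type*} [NormedAddCommGroup 𝓗] [InnerProductSpace ℂ 𝓗] [CompleteSpace 𝓗]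
    (H K : 𝓗 →L[ℂ] 𝓗) (hH : 0 ≤ H)
    (hHns : Function.Injective (H : 𝓗 → 𝓗)) :
    ∀ X Y : 𝓗 →L[ℂ] 𝓗, 0 ≤ X → 0 ≤ Y → X * H * X = K → Y * H * Y = K → X = Y := by
  intro X Y hX hY hXK hYK
  have hS_inj : Function.Injective (CFC.sqrt H : 𝓗 →L[ℂ] 𝓗) := by
    rw [← CFC.sqrt_mul_sqrt_self H hH, ContinuousLinearMap.mul_def,
      ContinuousLinearMap.coe_comp] at hHns
    exact hHns.of_comp
  exact (CFC.sqrt_nonneg H).isSelfAdjoint.eq_of_conj_eq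
    (ContinuousLinearMap.isLeftRegular_of_injective hS_inj) hX.isSelfAdjoint hY.isSelfAdjoint
    (CFC.sqrt_conj_eq_of_mul_mul_eq hH hX hY (hXK.trans hYK.symm))

/-- For positive `H, K` with `H` nonsingular (injective), the equation `XHX = K` has at most
one positive bounded solution. -/
theorem stmt_2 {𝓗 : Type*} [NormedAddCommGroup 𝓗] [InnerProductSpace ℂ 𝓗] [CompleteSpace 𝓗]
    (H K : 𝓗 →L[ℂ] 𝓗) (hH : 0 ≤ H) (hK : 0 ≤ K)
    (hHns : Function.Injective (H : 𝓗 → 𝓗)) :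
    ∀ X Y : 𝓗 →L[ℂ] 𝓗, 0 ≤ X → 0 ≤ Y → X * H * X = K → Y * H * Y = K → X = Y :=
  stmt_2_general H K hH hHns
end

section
/- Let 𝓗 be a complex Hilbert space and H, K positive bounded operators with H nonsingular. If the equation XHX = K has a positive bounded solution, then the range of (H^{1/2}KH^{1/2})^{1/4} is contained in the range of H^{1/2}. -/
/-!
Put `T = H^{1/2}` and let `X ≥ 0` solve `XHX = K`. Then `TKT = (TXT)²`, so
`(TKT)^{1/4} = S := (TXT)^{1/2}`, and `‖S x‖² = ⟪X T x, T x⟫ ≤ ‖X‖ ‖T x‖²`.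
By Douglas' lemma this domination of `S` by `T` gives `range S ⊆ range T`.
-/

open scoped InnerProductSpace

namespace ContinuousLinearMap

section Douglas

variable {𝕜 E F G : Type*} [RCLike 𝕜]
  [NormedAddCommGroup E] [InnerProductSpace 𝕜 E] [CompleteSpace E]
  [NormedAddCommGroup F] [InnerProductSpace 𝕜 F] [CompleteSpace F]

/-- The functional `T x ↦ ⟪y, x⟫` is well defined and bounded on `range T`; a Hahn–Banach
extension of it, represented by Riesz as `⟪v, ·⟫`, gives `y = T† v`. -/
theorem mem_range_adjoint_of_norm_inner_le (T : E →L[𝕜] F) (y : E) (c : ℝ)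
    (hbound : ∀ x, ‖⟪y, x⟫_𝕜‖ ≤ c * ‖T x‖) : y ∈ Set.range (adjoint T) := by
  set L : E →ₗ[𝕜] F := T.toLinearMap
  have hker : LinearMap.ker L ≤ LinearMap.ker (innerₛₗ 𝕜 y) := fun x hx => by
    simpa [show T x = 0 from hx] using hbound x
  let f : LinearMap.range L →ₗ[𝕜] 𝕜 :=
    ((LinearMap.ker L).liftQ (innerₛₗ 𝕜 y) hker).comp L.quotKerEquivRange.symm.toLinearMap
  have hf : ∀ x, f ⟨L x, L.mem_range_self x⟩ = ⟪y, x⟫_𝕜 := fun x => by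
    simp only [f, LinearMap.comp_apply, LinearEquiv.coe_coe,
      LinearMap.quotKerEquivRange_symm_apply_image]
    rfl
  have hf_bound : ∀ z, ‖f z‖ ≤ c * ‖z‖ := by
    rintro ⟨_, x, rfl⟩
    exact (hf x).symm ▸ hbound x
  obtain ⟨g, hg, -⟩ := exists_extension_norm_eq _ (f.mkContinuous c hf_bound)
  refine ⟨(InnerProductSpace.toDual 𝕜 F).symm g, ext_inner_right 𝕜 fun x => ?_⟩
  rw [adjoint_inner_left, InnerProductSpace.toDual_symm_apply]
  exact (hg ⟨L x, L.mem_range_self x⟩).trans (hf x)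

variable [NormedAddCommGroup G] [InnerProductSpace 𝕜 G] [CompleteSpace G]

/-- One direction of Douglas' range inclusion theorem. -/
theorem range_adjoint_subset_of_norm_apply_le (S : G →L[𝕜] E) (T : G →L[𝕜] F) (c : ℝ)
    (h : ∀ x, ‖S x‖ ≤ c * ‖T x‖) : Set.range (adjoint S) ⊆ Set.range (adjoint T) := by
  rintro _ ⟨u, rfl⟩
  refine mem_range_adjoint_of_norm_inner_le T _ (‖u‖ * c) fun x => ?_
  calc ‖⟪adjoint S u, x⟫_𝕜‖ = ‖⟪u, S x⟫_𝕜‖ := by rw [adjoint_inner_left]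
    _ ≤ ‖u‖ * ‖S x‖ := norm_inner_le_norm _ _
    _ ≤ ‖u‖ * (c * ‖T x‖) := by gcongr; exact h x
    _ = ‖u‖ * c * ‖T x‖ := by ring

end Douglas

section Sqrt

variable {E : Type*} [NormedAddCommGroup E] [InnerProductSpace ℂ E] [CompleteSpace E]

theorem norm_sqrt_apply_sq {A : E →L[ℂ] E} (hA : 0 ≤ A) (x : E) :
    ‖CFC.sqrt A x‖ ^ 2 = RCLike.re ⟪A x, x⟫_ℂ := by
  have hS : IsSelfAdjoint (CFC.sqrt A) := .of_nonneg (CFC.sqrt_nonneg A)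
  rw [apply_norm_sq_eq_inner_adjoint_left, hS.adjoint_eq]
  congr 3
  exact CFC.sqrt_mul_sqrt_self A hA

theorem norm_sqrt_star_mul_mul_apply_le {X : E →L[ℂ] E} (hX : 0 ≤ X) (T : E →L[ℂ] E) (x : E) :
    ‖CFC.sqrt (star T * X * T) x‖ ≤ √‖X‖ * ‖T x‖ := by
  have hsq : ‖CFC.sqrt (star T * X * T) x‖ ^ 2 ≤ (√‖X‖ * ‖T x‖) ^ 2 :=
    calc ‖CFC.sqrt (star T * X * T) x‖ ^ 2 = RCLike.re ⟪X (T x), T x⟫_ℂ := by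
          rw [norm_sqrt_apply_sq (star_left_conjugate_nonneg hX T), star_eq_adjoint]
          exact congrArg RCLike.re (adjoint_inner_left T x (X (T x)))
      _ ≤ ‖X (T x)‖ * ‖T x‖ := re_inner_le_norm _ _
      _ ≤ ‖X‖ * ‖T x‖ * ‖T x‖ := by gcongr; exact X.le_opNorm _
      _ = (√‖X‖ * ‖T x‖) ^ 2 := by rw [mul_pow, Real.sq_sqrt (norm_nonneg _)]; ring
  exact le_of_sq_le_sq hsq (by positivity)

end Sqrt

end ContinuousLinearMap

open ContinuousLinearMap in
theorem stmt_3_general {𝓗 : Type*} [NormedAddCommGroup 𝓗] [InnerProductSpace ℂ 𝓗] [CompleteSpace 𝓗]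
    (H K : 𝓗 →L[ℂ] 𝓗) (hH : 0 ≤ H)
    (hsol : ∃ X : 𝓗 →L[ℂ] 𝓗, 0 ≤ X ∧ X * H * X = K) :
    Set.range ⇑(CFC.sqrt (CFC.sqrt (CFC.sqrt H * K * CFC.sqrt H))) ⊆
      Set.range ⇑(CFC.sqrt H) := by
  obtain ⟨X, hX, rfl⟩ := hsol
  set T := CFC.sqrt H
  have hT : IsSelfAdjoint T := .of_nonneg (CFC.sqrt_nonneg H)
  have hconj : CFC.sqrt (T * (X * H * X) * T) = star T * X * T := by
    rw [← CFC.sqrt_mul_sqrt_self H hH, ← CFC.sqrt_mul_self (star T * X * T)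
      (star_left_conjugate_nonneg hX T), hT.star_eq]
    simp only [T, mul_assoc]
  have hS : IsSelfAdjoint (CFC.sqrt (star T * X * T)) := .of_nonneg (CFC.sqrt_nonneg _)
  rw [hconj]
  simpa only [hS.adjoint_eq, hT.adjoint_eq] using
    range_adjoint_subset_of_norm_apply_le _ T _ (norm_sqrt_star_mul_mul_apply_le hX T)

/-- If `XHX = K` has a positive solution (`H, K` positive, `H` injective), then the range of
`(H^{1/2} K H^{1/2})^{1/4}` is contained in the range of `H^{1/2}`. -/
theorem stmt_3 {𝓗 : Type*} [NormedAddCommGroup 𝓗] [InnerProductSpace ℂ 𝓗] [CompleteSpace 𝓗]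
    (H K : 𝓗 →L[ℂ] 𝓗) (hH : 0 ≤ H) (hK : 0 ≤ K)
    (hHns : Function.Injective (H : 𝓗 → 𝓗))
    (hsol : ∃ X : 𝓗 →L[ℂ] 𝓗, 0 ≤ X ∧ X * H * X = K) :
    Set.range ⇑(CFC.sqrt (CFC.sqrt (CFC.sqrt H * K * CFC.sqrt H))) ⊆
      Set.range ⇑(CFC.sqrt H) :=
  stmt_3_general H K hH hsol
end

section
/- Let 𝓗 be a complex Hilbert space and H, K positive bounded operators with H nonsingular. If the range of (H^{1/2}KH^{1/2})^{1/4} is contained in the range of H^{1/2}, then the equation XHX = K has a positive bounded solution. -/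
/-!
Put `B = H^{1/2}` and `A = (BKB)^{1/4}`. Since `B` is injective and `ran A ⊆ ran B`, the closed
graph theorem factors `A = BC` with `C` bounded (Douglas' lemma). The positive operator
`X = CC*` satisfies `BXB = AA* = (BKB)^{1/2}`, hence `B(XHX)B = (BXB)^2 = BKB`, and `XHX = K`
follows by cancelling `B`: on the left by injectivity, on the right by taking adjoints.
-/

open Function

namespace ContinuousLinearMap

theorem exists_comp_eq_of_range_subset {𝕜 E F G : Type*} [NontriviallyNormedField 𝕜]
    [NormedAddCommGroup E] [NormedSpace 𝕜 E] [CompleteSpace E]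
    [NormedAddCommGroup F] [NormedSpace 𝕜 F] [CompleteSpace F]
    [NormedAddCommGroup G] [NormedSpace 𝕜 G]
    {A : E →L[𝕜] G} {B : F →L[𝕜] G} (hB : Injective B) (hAB : Set.range A ⊆ Set.range B) :
    ∃ C : E →L[𝕜] F, B.comp C = A := by
  set C₀ : E →ₗ[𝕜] F := LinearMap.codRestrictOfInjective (A : E →ₗ[𝕜] G) (B : F →ₗ[𝕜] G) hB
    fun x => hAB ⟨x, rfl⟩
  have hBC₀ (x : E) : B (C₀ x) = A x := LinearMap.codRestrictOfInjective_comp_apply _ _ _ _ x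
  have hgraph : (C₀.graph : Set (E × F)) = {p | B p.2 = A p.1} := by
    ext p
    simp only [SetLike.mem_coe, LinearMap.mem_graph_iff, Set.mem_ofPred_eq]
    exact ⟨fun h => h ▸ hBC₀ p.1, fun h => hB (h.trans (hBC₀ p.1).symm)⟩
  have hclosed : IsClosed (C₀.graph : Set (E × F)) :=
    hgraph ▸ isClosed_eq (B.continuous.comp continuous_snd) (A.continuous.comp continuous_fst)
  exact ⟨ofIsClosedGraph hclosed, ext hBC₀⟩

theorem isLeftRegular_of_injective_s4 {R M : Type*} [Semiring R] [TopologicalSpace M]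
    [AddCommMonoid M] [Module R M] {B : M →L[R] M} (hB : Injective B) : IsLeftRegular B :=
  fun _ _ h => ext fun x => hB (congrArg (· x) h)

end ContinuousLinearMap

theorem IsSelfAdjoint.isRegular_of_isLeftRegular {R : Type*} [Mul R] [StarMul R] {b : R}
    (hb : IsSelfAdjoint b) (h : IsLeftRegular b) : IsRegular b :=
  ⟨h, hb.star_eq ▸ h.star⟩

theorem stmt_4_general {𝓗 : Type*} [NormedAddCommGroup 𝓗] [InnerProductSpace ℂ 𝓗] [CompleteSpace 𝓗]
    (H K : 𝓗 →L[ℂ] 𝓗) (hH : 0 ≤ H) (hK : 0 ≤ K)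
    (hHinj : Function.Injective (H : 𝓗 → 𝓗))
    (hr : Set.range ⇑(CFC.sqrt (CFC.sqrt (CFC.sqrt H * K * CFC.sqrt H))) ⊆
      Set.range ⇑(CFC.sqrt H)) :
    ∃ X : 𝓗 →L[ℂ] 𝓗, 0 ≤ X ∧ X * H * X = K := by
  set B := CFC.sqrt H
  set S := CFC.sqrt (B * K * B)
  have hB : IsSelfAdjoint B := (CFC.sqrt_nonneg H).isSelfAdjoint
  have hBB : B * B = H := CFC.sqrt_mul_sqrt_self H hH
  have hBinj : Injective B := Injective.of_comp (f := B) (by rw [← hBB] at hHinj; exact hHinj)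
  have hBreg : IsRegular B :=
    hB.isRegular_of_isLeftRegular (ContinuousLinearMap.isLeftRegular_of_injective_s4 hBinj)
  obtain ⟨C, hBC⟩ : ∃ C, B * C = CFC.sqrt S :=
    ContinuousLinearMap.exists_comp_eq_of_range_subset hBinj hr
  refine ⟨C * star C, mul_star_self_nonneg C, ?_⟩
  have hBXB : B * (C * star C) * B = S :=
    calc B * (C * star C) * B = (B * C) * star (B * C) := by
          rw [star_mul, hB.star_eq]; noncomm_ring
      _ = CFC.sqrt S * CFC.sqrt S := by rw [hBC, (CFC.sqrt_nonneg S).isSelfAdjoint.star_eq]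
      _ = S := CFC.sqrt_mul_sqrt_self S (CFC.sqrt_nonneg _)
  refine hBreg.left (hBreg.right ?_)
  calc B * (C * star C * H * (C * star C)) * B
        = (B * (C * star C) * B) * (B * (C * star C) * B) := by rw [← hBB]; noncomm_ring
    _ = S * S := by rw [hBXB]
    _ = B * K * B := CFC.sqrt_mul_sqrt_self _ (hB.conjugate_nonneg hK)

/-- If the range of `(H^{1/2} K H^{1/2})^{1/4}` is contained in the range of `H^{1/2}`
(`H, K` positive, `H` injective with dense range), then `XHX = K` has a positive solution. -/
theorem stmt_4 {𝓗 : Type*} [NormedAddCommGroup 𝓗] [InnerProductSpace ℂ 𝓗] [CompleteSpace 𝓗]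
    (H K : 𝓗 →L[ℂ] 𝓗) (hH : 0 ≤ H) (hK : 0 ≤ K)
    (hHinj : Function.Injective (H : 𝓗 → 𝓗)) (hHdr : DenseRange (H : 𝓗 → 𝓗))
    (hr : Set.range ⇑(CFC.sqrt (CFC.sqrt (CFC.sqrt H * K * CFC.sqrt H))) ⊆
      Set.range ⇑(CFC.sqrt H)) :
    ∃ X : 𝓗 →L[ℂ] 𝓗, 0 ≤ X ∧ X * H * X = K :=
  stmt_4_general H K hH hK hHinj hr
end

section
/- Let 𝓗 be a complex Hilbert space and H, K positive bounded operators with H nonsingular. Then XHX = K has a positive bounded solution if and only if the range of (H^{1/2}KH^{1/2})^{1/2} is contained in the range of H^{1/2} and (H^{1/2}KH^{1/2})^{1/2} ≤ λH for some scalar λ > 0. -/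
/-!
Write `S = H^{1/2}` and `A = (S K S)^{1/2}`. If `X ≥ 0` solves `XHX = K`, then `S X S` is a positive
square root of `S X H X S = S K S`, so `A = S X S`: its range lies in that of `S`, and
`S X S ≤ ‖X‖ S² = ‖X‖ H`.

Conversely, `A ≤ λ H` says `‖A^{1/2} x‖ ≤ √λ ‖S x‖`. Since `S` is injective and self-adjoint it has
dense range, so (Douglas) `A^{1/2} = C S` for a bounded `C`, and `X = C* C` works:
`S (X H X) S = (C S)* (C S) (C S)* (C S) = A² = S K S`, and `S` can be cancelled on both sides.
-/

theorem CFC.sqrt_conj_eq_of_mul_mul_eq_s5 {A : Type*} [CStarAlgebra A] [PartialOrder A]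
    [StarOrderedRing A] {s x k : A} (hs : IsSelfAdjoint s) (hx : 0 ≤ x)
    (h : x * (s * s) * x = k) : CFC.sqrt (s * k * s) = s * x * s :=
  CFC.sqrt_unique (by rw [← h]; simp only [mul_assoc]) (hs.conjugate_nonneg hx)

theorem IsSelfAdjoint.conj_star_mul_self_eq {R : Type*} [Semiring R] [StarRing R]
    {s r c : R} (hs : IsSelfAdjoint s) (hr : IsSelfAdjoint r) (hcs : c * s = r) :
    s * (star c * c * (s * s) * (star c * c)) * s = r * r * (r * r) := by
  have hsc : s * star c = r := by rw [← hr.star_eq, ← hcs, star_mul, hs.star_eq]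
  calc s * (star c * c * (s * s) * (star c * c)) * s
      = (s * star c) * (c * s) * ((s * star c) * (c * s)) := by simp only [mul_assoc]
    _ = r * r * (r * r) := by rw [hsc, hcs]

namespace ContinuousLinearMap

section

variable {𝕜 E F G : Type*} [NontriviallyNormedField 𝕜]
  [NormedAddCommGroup E] [NormedSpace 𝕜 E] [NormedAddCommGroup F] [NormedSpace 𝕜 F]
  [NormedAddCommGroup G] [NormedSpace 𝕜 G] [CompleteSpace G]

theorem exists_comp_eq_of_norm_le (S : E →L[𝕜] F) (R : E →L[𝕜] G) (hS : DenseRange S) {c : ℝ}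
    (h : ∀ x, ‖R x‖ ≤ c * ‖S x‖) : ∃ C : F →L[𝕜] G, C ∘L S = R :=
  ⟨(R : E →ₗ[𝕜] G).extendOfNorm (S : E →ₗ[𝕜] F),
    ext fun x ↦ LinearMap.extendOfNorm_eq hS ⟨c, h⟩ x⟩

theorem eq_of_conj_eq {S T U : E →L[𝕜] E} (hinj : Function.Injective S) (hS : DenseRange S)
    (h : S * T * S = S * U * S) : T = U := by
  have hTS : ∀ x, T (S x) = U (S x) := fun x ↦ hinj (by simpa using congr($h x))
  exact DFunLike.coe_injective (hS.equalizer T.continuous U.continuous (funext hTS))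

end

variable {𝕜 E F : Type*} [RCLike 𝕜]
  [NormedAddCommGroup E] [InnerProductSpace 𝕜 E] [CompleteSpace E]
  [NormedAddCommGroup F] [InnerProductSpace 𝕜 F] [CompleteSpace F]

theorem denseRange_of_injective_adjoint (T : E →L[𝕜] F) (h : Function.Injective (adjoint T)) :
    DenseRange T := by
  have hker : T.rangeᗮ = ⊥ := by rwa [orthogonal_range, LinearMap.ker_eq_bot]
  have hclosure : T.range.topologicalClosure = ⊤ := Submodule.topologicalClosure_eq_top_iff.mpr hker
  rw [DenseRange, ← coe_coe, ← LinearMap.coe_range]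
  exact Submodule.dense_iff_topologicalClosure_eq_top.mpr hclosure

theorem norm_apply_le_sqrt_mul_of_star_mul_self_le {T U : E →L[𝕜] E} {c : ℝ}
    (h : star T * T ≤ (c : 𝕜) • (star U * U)) (x : E) : ‖T x‖ ≤ √c * ‖U x‖ := by
  have hsq : ‖T x‖ ^ 2 ≤ c * ‖U x‖ ^ 2 := by
    have hpos := (le_def _ _).mp h |>.re_inner_nonneg_left x
    simp only [star_eq_adjoint] at hpos
    rw [apply_norm_sq_eq_inner_adjoint_left, apply_norm_sq_eq_inner_adjoint_left]
    simpa [inner_sub_left, inner_smul_left, sub_nonneg] using hpos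
  calc ‖T x‖ = √(‖T x‖ ^ 2) := (Real.sqrt_sq (norm_nonneg _)).symm
    _ ≤ √(c * ‖U x‖ ^ 2) := Real.sqrt_le_sqrt hsq
    _ = √c * ‖U x‖ := by rw [Real.sqrt_mul' _ (by positivity), Real.sqrt_sq (norm_nonneg _)]

end ContinuousLinearMap

/-- For positive `H, K` with `H` nonsingular (injective), `XHX = K` has a positive solution iff
the range of `(H^{1/2} K H^{1/2})^{1/2}` is contained in the range of `H^{1/2}` and
`(H^{1/2} K H^{1/2})^{1/2} ≤ λ • H` for some `λ > 0`. -/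
theorem stmt_5 {𝓗 : Type*} [NormedAddCommGroup 𝓗] [InnerProductSpace ℂ 𝓗] [CompleteSpace 𝓗]
    (H K : 𝓗 →L[ℂ] 𝓗) (hH : 0 ≤ H) (hK : 0 ≤ K)
    (hHns : Function.Injective (H : 𝓗 → 𝓗)) :
    (∃ X : 𝓗 →L[ℂ] 𝓗, 0 ≤ X ∧ X * H * X = K) ↔
      (Set.range ⇑(CFC.sqrt (CFC.sqrt H * K * CFC.sqrt H)) ⊆
        Set.range ⇑(CFC.sqrt H) ∧
      ∃ lam : ℝ, 0 < lam ∧ CFC.sqrt (CFC.sqrt H * K * CFC.sqrt H) ≤ lam • H) := by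
  set S := CFC.sqrt H
  have hS : IsSelfAdjoint S := .of_nonneg (CFC.sqrt_nonneg H)
  have hSS : S * S = H := CFC.sqrt_mul_sqrt_self H hH
  constructor
  · rintro ⟨X, hX, rfl⟩
    rw [CFC.sqrt_conj_eq_of_mul_mul_eq_s5 hS hX (by rw [hSS])]
    refine ⟨?_, ‖X‖ + 1, by positivity, ?_⟩
    · rintro _ ⟨x, rfl⟩
      exact ⟨X (S x), rfl⟩
    · calc S * X * S ≤ ‖X‖ • H := by
            simpa only [hS.star_eq, hSS] using
              CStarAlgebra.star_left_conjugate_le_norm_smul (a := S) (b := X)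
        _ ≤ (‖X‖ + 1) • H := smul_le_smul_of_nonneg_right (by linarith) hH
  · rintro ⟨-, lam, -, hle⟩
    set R := CFC.sqrt (CFC.sqrt (S * K * S))
    have hR : IsSelfAdjoint R := .of_nonneg (CFC.sqrt_nonneg _)
    have hSinj : Function.Injective S := .of_comp (f := S) (by simpa [← hSS] using hHns)
    have hdense : DenseRange S := S.denseRange_of_injective_adjoint
      (by rwa [← ContinuousLinearMap.star_eq_adjoint, hS.star_eq])
    obtain ⟨C, hC⟩ := S.exists_comp_eq_of_norm_le R hdense
      (ContinuousLinearMap.norm_apply_le_sqrt_mul_of_star_mul_self_le (U := S)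
        (by rwa [hR.star_eq, hS.star_eq, CFC.sqrt_mul_sqrt_self _ (CFC.sqrt_nonneg _), hSS,
          ← RCLike.real_smul_eq_coe_smul]))
    refine ⟨star C * C, star_mul_self_nonneg C, ContinuousLinearMap.eq_of_conj_eq hSinj hdense ?_⟩
    rw [← hSS, hS.conj_star_mul_self_eq hR hC, CFC.sqrt_mul_sqrt_self _ (CFC.sqrt_nonneg _),
      CFC.sqrt_mul_sqrt_self _ (hS.conjugate_nonneg hK)]
end

section
/- Let 𝓗 be a complex Hilbert space and H, K positive bounded operators. If K ≤ a²H for some a > 0 and H is nonsingular, then (H^{1/2}KH^{1/2})^{1/2} ≤ aH. -/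
/-! Conjugating `K ≤ a² H` by `H^{1/2}` gives `H^{1/2} K H^{1/2} ≤ a² H² = (aH)²`, and the
square root is operator monotone. -/

namespace CFC

variable {A : Type*} [CStarAlgebra A] [PartialOrder A] [StarOrderedRing A]

lemma sqrt_le_of_le_sq {a b : A} (hb : 0 ≤ b) (h : a ≤ b ^ 2) : sqrt a ≤ b :=
  sqrt_sq b hb ▸ sqrt_le_sqrt a (b ^ 2) h

lemma sqrt_mul_mul_sqrt_le_sq_smul {h k : A} (hh : 0 ≤ h) {c : ℝ} (hkh : k ≤ (c ^ 2) • h) :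
    sqrt h * k * sqrt h ≤ (c • h) ^ 2 := by
  have hconj : sqrt h * h * sqrt h = h * h := by
    have hsq : sqrt h * sqrt h = h := sqrt_mul_sqrt_self h hh
    -- keeps `rw` away from the `h` inside `sqrt h`
    generalize sqrt h = r at hsq ⊢
    rw [← hsq]
    noncomm_ring
  calc sqrt h * k * sqrt h ≤ sqrt h * ((c ^ 2) • h) * sqrt h :=
        (IsSelfAdjoint.of_nonneg (sqrt_nonneg h)).conjugate_le_conjugate hkh
    _ = (c • h) ^ 2 := by rw [mul_smul_comm, smul_mul_assoc, hconj, smul_pow, sq h]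

end CFC

theorem stmt_6_general {𝓗 : Type*} [NormedAddCommGroup 𝓗] [InnerProductSpace ℂ 𝓗] [CompleteSpace 𝓗]
    (H K : 𝓗 →L[ℂ] 𝓗) (hH : 0 ≤ H)
    (a : ℝ) (ha : 0 < a) (hKH : K ≤ (a ^ 2) • H) :
    CFC.sqrt (CFC.sqrt H * K * CFC.sqrt H) ≤ a • H :=
  CFC.sqrt_le_of_le_sq (smul_nonneg ha.le hH) (CFC.sqrt_mul_mul_sqrt_le_sq_smul hH hKH)

/-- For positive `H, K` with `H` nonsingular, if `K ≤ a² • H` for some `a > 0`, then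
`(H^{1/2} K H^{1/2})^{1/2} ≤ a • H`. -/
theorem stmt_6 {𝓗 : Type*} [NormedAddCommGroup 𝓗] [InnerProductSpace ℂ 𝓗] [CompleteSpace 𝓗]
    (H K : 𝓗 →L[ℂ] 𝓗) (hH : 0 ≤ H) (hK : 0 ≤ K)
    (hHns : DenseRange (H : 𝓗 → 𝓗)) (a : ℝ) (ha : 0 < a) (hKH : K ≤ (a ^ 2) • H) :
    CFC.sqrt (CFC.sqrt H * K * CFC.sqrt H) ≤ a • H :=
  stmt_6_general H K hH a ha hKH
end

section
/- Let E be a Hilbert C*-module over a C*-algebra A, and let A, B be adjointable operators on E such that the closures of the ranges of A* and B* are orthogonally complemented submodules of E. If the range of B is contained in the range of A, then BB* ≤ λ AA* for some λ > 0 and the range of BB* is contained in the range of A. -/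
open scoped ComplexOrder

open scoped RightActions

/-- The Hilbert C⋆-module class as Mathlib stated it in December 2024 (right `A`-action, given as
`SMul Aᵐᵒᵖ E`); Mathlib's `CStarModule` now uses a left action with other axioms. -/
class CStarModuleRight (A E : Type*) [NonUnitalSemiring A] [StarRing A] [Module ℂ A]
    [AddCommGroup E] [Module ℂ E] [PartialOrder A] [SMul Aᵐᵒᵖ E] [Norm A] [Norm E]
    extends Inner A E where
  inner_add_right {x} {y} {z} : inner x (y + z) = inner x y + inner x z
  inner_self_nonneg {x} : 0 ≤ inner x x
  inner_self {x} : inner x x = 0 ↔ x = 0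
  inner_op_smul_right {a : A} {x y : E} : inner x (y <• a) = inner x y * a
  inner_smul_right_complex {z : ℂ} {x} {y} : inner x (z • y) = z • inner x y
  star_inner x y : star (inner x y) = inner y x
  norm_eq_sqrt_norm_inner_self x : ‖x‖ = √‖inner x x‖

/-- `S` is orthogonally complemented in the Hilbert C*-module `E`: every element of `E` splits
as a sum of an element of `S` and an element orthogonal to `S`. -/
def OrthoComplemented {A E : Type*} [NonUnitalCStarAlgebra A] [PartialOrder A]
    [StarOrderedRing A] [NormedAddCommGroup E] [NormedSpace ℂ E] [SMul Aᵐᵒᵖ E]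
    [CStarModuleRight A E] (S : Set E) : Prop :=
  ∀ x : E, ∃ m ∈ S, ∃ n : E, (∀ y ∈ S, inner (𝕜 := A) y n = 0) ∧ x = m + n


/-!
Douglas factorization. `ker T` consists of the vectors orthogonal to `range T'`, so `T` is
injective on `closure (range T')`, and since this closure is complemented every `S x` has a unique
preimage `C x` in it; `C` is bounded by the closed graph theorem. Splitting along the same decomposition
shows that `C` has an adjoint `C'`, and `C' T' = S'`. Hence
`⟪S' x, S' x⟫ = ⟪C' T' x, C' T' x⟫ ≤ ‖C C'‖ ⟪T' x, T' x⟫`: for a symmetric `Q` with `‖Q‖ ≤ 1`,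
`1 - Q` is the square of a symmetric operator `1 - w`, where `w` is the limit of the iteration
`w ↦ (Q + w²) / 2`.
-/

open Filter Topology

section SqrtIter

variable {R : Type*} [NormedRing R] [NormedAlgebra ℝ R]

/-- If `‖q‖ ≤ 1`, this sequence converges to `w = 1 - √(1 - q)`. -/
noncomputable def sqrtIter (q : R) : ℕ → R
  | 0 => 0
  | n + 1 => (2⁻¹ : ℝ) • (q + sqrtIter q n * sqrtIter q n)

lemma sqrtIter_one_mem_Icc (n : ℕ) : sqrtIter (1 : ℝ) n ∈ Set.Icc 0 1 := by
  induction n with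
  | zero => simp [sqrtIter]
  | succ n ih =>
    obtain ⟨h0, h1⟩ := ih
    simp only [sqrtIter, smul_eq_mul, Set.mem_Icc]
    constructor <;> nlinarith

lemma monotone_sqrtIter_one : Monotone (sqrtIter (1 : ℝ)) := by
  refine monotone_nat_of_le_succ fun n => ?_
  have h := sqrtIter_one_mem_Icc n
  simp only [sqrtIter, smul_eq_mul]
  nlinarith [sq_nonneg (1 - sqrtIter (1 : ℝ) n)]

lemma norm_smul_two_inv (x : R) : ‖(2⁻¹ : ℝ) • x‖ = 2⁻¹ * ‖x‖ := by
  rw [norm_smul, norm_inv, Real.norm_two]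

variable {q : R}

lemma norm_sqrtIter_le (hq : ‖q‖ ≤ 1) (n : ℕ) : ‖sqrtIter q n‖ ≤ sqrtIter (1 : ℝ) n := by
  induction n with
  | zero => simp [sqrtIter]
  | succ n ih =>
    simp only [sqrtIter, norm_smul_two_inv, smul_eq_mul]
    have := (norm_add_le _ _).trans (add_le_add hq (norm_mul_le (sqrtIter q n) (sqrtIter q n)))
    nlinarith [norm_nonneg (sqrtIter q n)]

lemma norm_sqrtIter_succ_sub_le (hq : ‖q‖ ≤ 1) (n : ℕ) :
    ‖sqrtIter q (n + 1) - sqrtIter q n‖ ≤ sqrtIter (1 : ℝ) (n + 1) - sqrtIter (1 : ℝ) n := by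
  induction n with
  | zero =>
    simp only [sqrtIter, mul_zero, add_zero, sub_zero, norm_smul_two_inv, smul_eq_mul]
    linarith
  | succ n ih =>
    set w := sqrtIter q
    set r := sqrtIter (1 : ℝ)
    have hw : w (n + 2) - w (n + 1) =
        (2⁻¹ : ℝ) • (w (n + 1) * (w (n + 1) - w n) + (w (n + 1) - w n) * w n) := by
      simp only [w, sqrtIter, ← smul_sub]
      congr 1
      noncomm_ring
    have hr : r (n + 2) - r (n + 1) = 2⁻¹ * ((r (n + 1) + r n) * (r (n + 1) - r n)) := by
      simp only [r, sqrtIter, smul_eq_mul]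
      ring
    have hmono : r n ≤ r (n + 1) := monotone_sqrtIter_one n.le_succ
    rw [hw, hr, norm_smul_two_inv]
    gcongr
    calc _ ≤ ‖w (n + 1)‖ * ‖w (n + 1) - w n‖ + ‖w (n + 1) - w n‖ * ‖w n‖ :=
          (norm_add_le _ _).trans (add_le_add (norm_mul_le _ _) (norm_mul_le _ _))
      _ ≤ r (n + 1) * (r (n + 1) - r n) + (r (n + 1) - r n) * r n := by
          have := (sqrtIter_one_mem_Icc (n + 1)).1
          gcongr
          all_goals first | exact ih | exact norm_sqrtIter_le hq _
      _ = (r (n + 1) + r n) * (r (n + 1) - r n) := by ring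

lemma cauchySeq_sqrtIter (hq : ‖q‖ ≤ 1) : CauchySeq (sqrtIter q) := by
  refine cauchySeq_of_dist_le_of_summable (fun n => sqrtIter (1 : ℝ) (n + 1) - sqrtIter 1 n)
    (fun n => by rw [dist_comm, dist_eq_norm]; exact norm_sqrtIter_succ_sub_le hq n) ?_
  refine summable_of_sum_range_le (c := 1)
    (fun n => sub_nonneg.2 (monotone_sqrtIter_one n.le_succ)) fun n => ?_
  rw [Finset.sum_range_sub]
  simp only [sqrtIter, sub_zero]
  exact (sqrtIter_one_mem_Icc n).2

theorem exists_mem_one_sub_mul_self_eq [CompleteSpace R] (hq : ‖q‖ ≤ 1) {s : Set R}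
    (hs : IsClosed s) (hs₀ : (0 : R) ∈ s) (hs_step : ∀ w ∈ s, (2⁻¹ : ℝ) • (q + w * w) ∈ s) :
    ∃ w ∈ s, (1 - w) * (1 - w) = 1 - q := by
  obtain ⟨w, hw⟩ := cauchySeq_tendsto_of_complete (cauchySeq_sqrtIter hq)
  have hmem : ∀ n, sqrtIter q n ∈ s := fun n => by
    induction n with
    | zero => exact hs₀
    | succ n ih => exact hs_step _ ih
  have hfix : w = (2⁻¹ : ℝ) • (q + w * w) :=
    tendsto_nhds_unique (hw.comp (tendsto_add_atTop_nat 1))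
      ((tendsto_const_nhds.add (hw.mul hw)).const_smul _)
  have hsum : w + w = q + w * w := by
    rw [← two_smul ℝ w]
    conv_lhs => rw [hfix]
    rw [smul_smul]
    norm_num
  refine ⟨w, hs.mem_of_tendsto hw (Eventually.of_forall hmem), ?_⟩
  calc (1 - w) * (1 - w) = 1 - (w + w) + w * w := by noncomm_ring
    _ = 1 - q := by rw [hsum]; abel

end SqrtIter

theorem exists_comp_eq_of_injOn {𝕜 E F G : Type*} [NontriviallyNormedField 𝕜]
    [NormedAddCommGroup E] [NormedSpace 𝕜 E] [CompleteSpace E]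
    [NormedAddCommGroup F] [NormedSpace 𝕜 F] [CompleteSpace F]
    [NormedAddCommGroup G] [NormedSpace 𝕜 G]
    (T : F →L[𝕜] G) (S : E →L[𝕜] G) (K : Submodule 𝕜 F) (hK : IsClosed (K : Set F))
    (hinj : Set.InjOn T K) (hrange : Set.range S ⊆ T '' K) :
    ∃ C : E →L[𝕜] F, T ∘L C = S ∧ ∀ x, C x ∈ K := by
  set TK : K →ₗ[𝕜] G := (T : F →ₗ[𝕜] G) ∘ₗ K.subtype
  have hTK : Function.Injective TK := fun a b h => Subtype.ext (hinj a.2 b.2 h)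
  have hS : ∀ x, (S : E →ₗ[𝕜] G) x ∈ LinearMap.range TK := fun x => by
    obtain ⟨m, hm, hmx⟩ := hrange ⟨x, rfl⟩
    exact ⟨⟨m, hm⟩, hmx⟩
  set C : E →ₗ[𝕜] F := K.subtype ∘ₗ (LinearEquiv.ofInjective TK hTK).symm.toLinearMap ∘ₗ
    (S : E →ₗ[𝕜] G).codRestrict _ hS
  have hTC : ∀ x, T (C x) = S x := fun x =>
    LinearEquiv.ofInjective_symm_apply (h := hTK) TK _
  have hCK : ∀ x, C x ∈ K := fun x => Subtype.coe_prop _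
  refine ⟨⟨C, C.continuous_of_seq_closed_graph fun u x y hu hCu => ?_⟩,
    ContinuousLinearMap.ext hTC, hCK⟩
  refine hinj (hK.mem_of_tendsto hCu (Eventually.of_forall fun n => hCK (u n))) (hCK x) ?_
  rw [hTC]
  refine tendsto_nhds_unique ((T.continuous.tendsto y).comp hCu) ?_
  simpa only [Function.comp_def, hTC] using (S.continuous.tendsto x).comp hu

lemma ContinuousLinearMap.closure_range_eq_topologicalClosure {𝕜 E F : Type*}
    [NontriviallyNormedField 𝕜] [NormedAddCommGroup E] [NormedSpace 𝕜 E] [NormedAddCommGroup F]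
    [NormedSpace 𝕜 F] (f : E →L[𝕜] F) :
    closure (Set.range f) = (LinearMap.range (f : E →ₗ[𝕜] F)).topologicalClosure := by
  rw [Submodule.topologicalClosure_coe, LinearMap.coe_range, ContinuousLinearMap.coe_coe]

attribute [simp] CStarModuleRight.inner_add_right CStarModuleRight.star_inner
  CStarModuleRight.inner_op_smul_right CStarModuleRight.inner_smul_right_complex

namespace CStarModuleRight

variable {A E : Type*}

local notation "⟪" x ", " y "⟫" => inner A x y

section Algebraic

variable [NonUnitalRing A] [StarRing A] [Module ℂ A] [PartialOrder A]
  [AddCommGroup E] [Module ℂ E] [SMul Aᵐᵒᵖ E] [Norm A] [Norm E] [CStarModuleRight A E]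

@[simp]
lemma inner_add_left {x y z : E} : ⟪x + y, z⟫ = ⟪x, z⟫ + ⟪y, z⟫ := by
  rw [← star_inner, inner_add_right, star_add, star_inner, star_inner]

@[simp]
lemma inner_op_smul_left {a : A} {x y : E} : ⟪x <• a, y⟫ = star a * ⟪x, y⟫ := by
  rw [← star_inner, inner_op_smul_right, star_mul, star_inner]

@[simp]
lemma inner_smul_right_real {z : ℝ} {x y : E} : ⟪x, z • y⟫ = z • ⟪x, y⟫ := by
  rw [← Complex.coe_smul, inner_smul_right_complex, Complex.coe_smul]

lemma inner_map_right_eq {T T' : E → E} (hT : ∀ x y, ⟪T x, y⟫ = ⟪x, T' y⟫) (x y : E) :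
    ⟪y, T x⟫ = ⟪T' y, x⟫ := by
  rw [← star_inner, hT, star_inner]

variable [StarModule ℂ A]

@[simp]
lemma inner_smul_left_complex {z : ℂ} {x y : E} : ⟪z • x, y⟫ = star z • ⟪x, y⟫ := by
  rw [← star_inner, inner_smul_right_complex, star_smul, star_inner]

@[simp]
lemma inner_smul_left_real {z : ℝ} {x y : E} : ⟪z • x, y⟫ = z • ⟪x, y⟫ := by
  rw [← Complex.coe_smul, inner_smul_left_complex, Complex.star_def, Complex.conj_ofReal,
    Complex.coe_smul]

def innerₛₗ : E →ₗ⋆[ℂ] E →ₗ[ℂ] A :=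
  LinearMap.mk₂'ₛₗ _ _ (fun x y => ⟪x, y⟫) (fun _ _ _ => inner_add_left)
    (fun _ _ _ => inner_smul_left_complex) (fun _ _ _ => inner_add_right)
    (fun _ _ _ => inner_smul_right_complex)

lemma innerₛₗ_apply {x y : E} : innerₛₗ x y = ⟪x, y⟫ := rfl

@[simp] lemma inner_zero_right {x : E} : ⟪x, 0⟫ = 0 := by simp [← innerₛₗ_apply]
@[simp] lemma inner_zero_left {x : E} : ⟪0, x⟫ = 0 := by simp [← innerₛₗ_apply]
@[simp] lemma inner_sub_right {x y z : E} : ⟪x, y - z⟫ = ⟪x, y⟫ - ⟪x, z⟫ := by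
  simp [← innerₛₗ_apply]
@[simp] lemma inner_sub_left {x y z : E} : ⟪x - y, z⟫ = ⟪x, z⟫ - ⟪y, z⟫ := by
  simp [← innerₛₗ_apply]

lemma ext_inner_left {w w' : E} (h : ∀ u, ⟪u, w⟫ = ⟪u, w'⟫) : w = w' := by
  rw [← sub_eq_zero, ← inner_self (A := A), inner_sub_right, h, sub_self]

lemma map_eq_zero_iff_forall_inner_eq_zero {T T' : E → E}
    (hT : ∀ x y, ⟪T x, y⟫ = ⟪x, T' y⟫) {n : E} : T n = 0 ↔ ∀ z, ⟪T' z, n⟫ = 0 :=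
  ⟨fun h z => by rw [← inner_map_right_eq hT, h, inner_zero_right],
    fun h => ext_inner_left (A := A) fun u => by rw [inner_map_right_eq hT, h, inner_zero_right]⟩

end Algebraic

section Norm

variable [NonUnitalCStarAlgebra A] [PartialOrder A]
  [NormedAddCommGroup E] [Module ℂ E] [SMul Aᵐᵒᵖ E] [CStarModuleRight A E]

lemma norm_sq_eq {x : E} : ‖x‖ ^ 2 = ‖⟪x, x⟫‖ := by
  simp [norm_eq_sqrt_norm_inner_self (A := A)]

variable [StarOrderedRing A]

lemma inner_mul_inner_swap_le {x y : E} : ⟪y, x⟫ * ⟪x, y⟫ ≤ ‖x‖ ^ 2 • ⟪y, y⟫ := by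
  rcases eq_or_ne x 0 with rfl | hx
  · simp
  have hconj (a : A) : star a * ⟪x, x⟫ * a ≤ ‖x‖ ^ 2 • (star a * a) := by
    rw [norm_sq_eq (A := A)]
    exact CStarAlgebra.star_left_conjugate_le_norm_smul (star_inner x x)
  have h := calc
    (0 : A) ≤ ⟪x <• ⟪x, y⟫ - ‖x‖ ^ 2 • y, x <• ⟪x, y⟫ - ‖x‖ ^ 2 • y⟫ := inner_self_nonneg
    _ = star ⟪x, y⟫ * ⟪x, x⟫ * ⟪x, y⟫ - ‖x‖ ^ 2 • (⟪y, x⟫ * ⟪x, y⟫)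
          - ‖x‖ ^ 2 • (star ⟪x, y⟫ * ⟪x, y⟫) + ‖x‖ ^ 2 • (‖x‖ ^ 2 • ⟪y, y⟫) := by
      simp only [inner_sub_right, inner_op_smul_right, inner_sub_left, inner_op_smul_left,
        inner_smul_left_real, inner_smul_right_real, sub_mul, smul_mul_assoc, smul_sub,
        mul_assoc, star_inner]
      abel
    _ ≤ ‖x‖ ^ 2 • (star ⟪x, y⟫ * ⟪x, y⟫) - ‖x‖ ^ 2 • (⟪y, x⟫ * ⟪x, y⟫)
          - ‖x‖ ^ 2 • (star ⟪x, y⟫ * ⟪x, y⟫) + ‖x‖ ^ 2 • (‖x‖ ^ 2 • ⟪y, y⟫) := by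
      gcongr
      exact hconj _
  simp only [star_inner, sub_self, zero_sub, le_neg_add_iff_add_le, add_zero] at h
  have hpos : 0 < ‖x‖ ^ 2 := by positivity
  rwa [smul_le_smul_iff_of_pos_left hpos] at h

lemma norm_inner_le {x y : E} : ‖⟪x, y⟫‖ ≤ ‖x‖ * ‖y‖ := by
  have h := calc
    ‖⟪x, y⟫‖ ^ 2 = ‖⟪y, x⟫ * ⟪x, y⟫‖ := by
      rw [← star_inner x, CStarRing.norm_star_mul_self, pow_two]
    _ ≤ ‖‖x‖ ^ 2 • ⟪y, y⟫‖ := by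
      refine CStarAlgebra.norm_le_norm_of_nonneg_of_le ?_ inner_mul_inner_swap_le
      rw [← star_inner x]
      exact star_mul_self_nonneg ⟪x, y⟫
    _ = (‖x‖ * ‖y‖) ^ 2 := by
      rw [norm_smul, mul_pow, norm_sq_eq (A := A) (x := y), Real.norm_eq_abs,
        abs_of_nonneg (by positivity)]
  exact le_of_sq_le_sq h (by positivity)

end Norm

section Operator

variable [NonUnitalCStarAlgebra A] [PartialOrder A] [StarOrderedRing A]
  [NormedAddCommGroup E] [NormedSpace ℂ E] [SMul Aᵐᵒᵖ E] [CStarModuleRight A E]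

noncomputable def innerSL : E →L⋆[ℂ] E →L[ℂ] A :=
  LinearMap.mkContinuous₂ innerₛₗ 1 fun x y => by
    rw [one_mul]
    exact norm_inner_le

lemma continuous_inner : Continuous fun p : E × E => ⟪p.1, p.2⟫ :=
  show Continuous fun p : E × E => innerSL p.1 p.2 by fun_prop

lemma tendsto_inner {ι : Type*} {l : Filter ι} {f g : ι → E} {x y : E}
    (hf : Tendsto f l (𝓝 x)) (hg : Tendsto g l (𝓝 y)) :
    Tendsto (fun i => ⟪f i, g i⟫) l (𝓝 ⟪x, y⟫) :=
  (continuous_inner.tendsto (x, y)).comp (hf.prodMk_nhds hg)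

lemma inner_eq_zero_of_mem_closure {s : Set E} {d : E} (h : ∀ y ∈ s, ⟪y, d⟫ = 0) :
    ∀ y ∈ closure s, ⟪y, d⟫ = 0 :=
  closure_minimal h (isClosed_eq (continuous_inner.comp (continuous_id.prodMk continuous_const))
    continuous_const)

lemma norm_le_of_inner_self_eq (X : E →L[ℂ] E) {u v : E} (h : ⟪u, u⟫ = ⟪X u, v⟫) :
    ‖u‖ ≤ ‖X‖ * ‖v‖ := by
  have hsq : ‖u‖ * ‖u‖ ≤ ‖u‖ * (‖X‖ * ‖v‖) := calc
    ‖u‖ * ‖u‖ = ‖⟪X u, v⟫‖ := by rw [← h, ← norm_sq_eq (A := A), sq]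
    _ ≤ ‖X u‖ * ‖v‖ := norm_inner_le
    _ ≤ ‖X‖ * ‖u‖ * ‖v‖ := by gcongr; exact X.le_opNorm u
    _ = ‖u‖ * (‖X‖ * ‖v‖) := by ring
  rcases (norm_nonneg u).eq_or_lt with h0 | h0
  · rw [← h0]
    positivity
  · exact le_of_mul_le_mul_left hsq h0

lemma exists_continuousLinearMap_of_inner (D : E →L[ℂ] E) {f : E → E}
    (hf : ∀ x y, ⟪D x, y⟫ = ⟪x, f y⟫) : ∃ D' : E →L[ℂ] E, ⇑D' = f := by
  have hlin : IsLinearMap ℂ f :=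
    ⟨fun y₁ y₂ => ext_inner_left (A := A) fun u => by
      rw [inner_add_right, ← hf, ← hf, ← hf, inner_add_right],
      fun c y => ext_inner_left (A := A) fun u => by
      rw [inner_smul_right_complex, ← hf, ← hf, inner_smul_right_complex]⟩
  exact ⟨(hlin.mk' f).mkContinuous ‖D‖ fun y => norm_le_of_inner_self_eq D (hf _ _).symm, rfl⟩

lemma isClosed_setOf_exists_inner_eq [CompleteSpace E] (D : E →L[ℂ] E) :
    IsClosed {y : E | ∃ w, ∀ x, ⟪D x, y⟫ = ⟪x, w⟫} := by
  refine IsSeqClosed.isClosed fun y z hy hyz => ?_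
  choose w hw using hy
  have hdist (m n : ℕ) : dist (w m) (w n) ≤ ‖D‖ * dist (y m) (y n) := by
    rw [dist_eq_norm, dist_eq_norm]
    refine norm_le_of_inner_self_eq (A := A) D ?_
    rw [inner_sub_right (x := D _), hw, hw, ← inner_sub_right]
  have hw_cauchy : CauchySeq w := by
    rw [cauchySeq_iff_tendsto_dist_atTop_0]
    refine squeeze_zero (fun _ => dist_nonneg) (fun p => hdist p.1 p.2) ?_
    simpa using (cauchySeq_iff_tendsto_dist_atTop_0.1 hyz.cauchySeq).const_mul ‖D‖
  obtain ⟨v, hv⟩ := cauchySeq_tendsto_of_complete hw_cauchy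
  refine ⟨v, fun x => tendsto_nhds_unique (tendsto_inner tendsto_const_nhds hyz) ?_⟩
  simpa only [hw] using tendsto_inner tendsto_const_nhds hv

lemma isClosed_setOf_inner_apply_eq :
    IsClosed {Q : E →L[ℂ] E | ∀ a b, ⟪Q a, b⟫ = ⟪a, Q b⟫} := by
  simp only [Set.ofPred_forall]
  exact isClosed_iInter fun a => isClosed_iInter fun b => isClosed_eq
    (continuous_inner.comp ((ContinuousLinearMap.apply ℂ E a).continuous.prodMk continuous_const))
    (continuous_inner.comp (continuous_const.prodMk (ContinuousLinearMap.apply ℂ E b).continuous))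

lemma injOn_closure_range_adjoint {T T' : E →L[ℂ] E} (hT : ∀ x y, ⟪T x, y⟫ = ⟪x, T' y⟫) :
    Set.InjOn T (closure (Set.range T')) := by
  intro m hm m' hm' hmm'
  have hd : m - m' ∈ closure (Set.range T') := by
    rw [T'.closure_range_eq_topologicalClosure] at hm hm' ⊢
    exact Submodule.sub_mem _ hm hm'
  have hperp : ∀ z, ⟪T' z, m - m'⟫ = 0 :=
    (map_eq_zero_iff_forall_inner_eq_zero hT).1 (by rw [map_sub, hmm', sub_self])
  rw [← sub_eq_zero, ← inner_self (A := A)]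
  exact inner_eq_zero_of_mem_closure (by rintro _ ⟨z, rfl⟩; exact hperp z) _ hd

variable [CompleteSpace E] {Q : E →L[ℂ] E}

/-- Writing `1 - Q = V * V` with `V` symmetric, `⟪a, a⟫ - ⟪a, Q a⟫ = ⟪V a, V a⟫ ≥ 0`. -/
lemma inner_apply_self_le_of_norm_le_one (hQ : ∀ a b, ⟪Q a, b⟫ = ⟪a, Q b⟫) (hQ₁ : ‖Q‖ ≤ 1)
    (a : E) : ⟪a, Q a⟫ ≤ ⟪a, a⟫ := by
  obtain ⟨W, hW, hWW⟩ := exists_mem_one_sub_mul_self_eq hQ₁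
    (isClosed_setOf_inner_apply_eq (A := A)) (fun _ _ => by simp)
    fun W (hW : ∀ a b, ⟪W a, b⟫ = ⟪a, W b⟫) a b => by simp [hQ, hW]
  set V := 1 - W
  have hV (a b : E) : ⟪V a, b⟫ = ⟪a, V b⟫ := by simp [V, hW a b]
  have h : ⟪a, a⟫ - ⟪a, Q a⟫ = ⟪V a, V a⟫ := by
    rw [hV, ← inner_sub_right]
    exact congrArg (⟪a, ·⟫) (by simpa using congr($hWW a).symm)
  rw [← sub_nonneg, h]
  exact inner_self_nonneg

lemma inner_apply_self_le_norm_smul (hQ : ∀ a b, ⟪Q a, b⟫ = ⟪a, Q b⟫) (a : E) :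
    ⟪a, Q a⟫ ≤ ‖Q‖ • ⟪a, a⟫ := by
  rcases eq_or_ne Q 0 with rfl | hQ₀
  · simp
  have hpos : 0 < ‖Q‖ := norm_pos_iff.2 hQ₀
  have h := inner_apply_self_le_of_norm_le_one (A := A) (Q := ‖Q‖⁻¹ • Q)
    (fun a b => by simp [hQ a b])
    (by rw [norm_smul, norm_inv, norm_norm, inv_mul_cancel₀ hpos.ne']) a
  rw [smul_apply, inner_smul_right_real] at h
  calc ⟪a, Q a⟫ = ‖Q‖ • ‖Q‖⁻¹ • ⟪a, Q a⟫ := (smul_inv_smul₀ hpos.ne' _).symm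
    _ ≤ ‖Q‖ • ⟪a, a⟫ := smul_le_smul_of_nonneg_left h hpos.le

variable {T T' : E →L[ℂ] E}

lemma inner_adjoint_apply_self_le (hT : ∀ x y, ⟪T x, y⟫ = ⟪x, T' y⟫) (y : E) :
    ⟪T' y, T' y⟫ ≤ ‖T ∘L T'‖ • ⟪y, y⟫ := by
  rw [← inner_map_right_eq hT]
  refine inner_apply_self_le_norm_smul (A := A) (Q := T ∘L T') (fun a b => ?_) y
  rw [ContinuousLinearMap.comp_apply, ContinuousLinearMap.comp_apply, hT, inner_map_right_eq hT]

theorem exists_comp_eq_of_range_subset {S : E →L[ℂ] E} (hT : ∀ x y, ⟪T x, y⟫ = ⟪x, T' y⟫)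
    (hTc : OrthoComplemented (A := A) (closure (Set.range T')))
    (hrange : Set.range S ⊆ Set.range T) :
    ∃ C : E →L[ℂ] E, T ∘L C = S ∧ ∀ x, C x ∈ closure (Set.range T') := by
  have hK := T'.closure_range_eq_topologicalClosure
  rw [hK]
  refine exists_comp_eq_of_injOn T S _ (Submodule.isClosed_topologicalClosure _)
    (hK ▸ injOn_closure_range_adjoint hT) ?_
  rintro _ ⟨x, rfl⟩
  obtain ⟨u, hu⟩ := hrange ⟨x, rfl⟩
  obtain ⟨m, hm, n, hn, rfl⟩ := hTc u
  refine ⟨m, hK ▸ hm, ?_⟩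
  have hn₀ : T n = 0 :=
    (map_eq_zero_iff_forall_inner_eq_zero hT).2 fun z => hn _ (subset_closure ⟨z, rfl⟩)
  rw [← hu, map_add, hn₀, add_zero]

theorem exists_adjoint_of_comp_eq {S S' C : E →L[ℂ] E} (hT : ∀ x y, ⟪T x, y⟫ = ⟪x, T' y⟫)
    (hS : ∀ x y, ⟪S x, y⟫ = ⟪x, S' y⟫)
    (hTc : OrthoComplemented (A := A) (closure (Set.range T')))
    (hTC : T ∘L C = S) (hC : ∀ x, C x ∈ closure (Set.range T')) :
    ∃ C' : E →L[ℂ] E, ∀ x y, ⟪C x, y⟫ = ⟪x, C' y⟫ := by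
  have hrange : Set.range T' ⊆ {y | ∃ w, ∀ x, ⟪C x, y⟫ = ⟪x, w⟫} := by
    rintro _ ⟨z, rfl⟩
    exact ⟨S' z, fun x => by rw [← hT, ← ContinuousLinearMap.comp_apply, hTC, hS]⟩
  have hclosure := closure_minimal hrange (isClosed_setOf_exists_inner_eq (A := A) C)
  have hadj : ∀ y, ∃ w, ∀ x, ⟪C x, y⟫ = ⟪x, w⟫ := by
    intro y
    obtain ⟨m, hm, n, hn, rfl⟩ := hTc y
    obtain ⟨w, hw⟩ := hclosure hm
    exact ⟨w, fun x => by rw [inner_add_right, hn _ (hC x), add_zero, hw]⟩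
  choose f hf using hadj
  obtain ⟨C', rfl⟩ := exists_continuousLinearMap_of_inner C fun x y => hf y x
  exact ⟨C', fun x y => hf y x⟩

end Operator

end CStarModuleRight

open CStarModuleRight

theorem stmt_8_general {A E : Type*} [NonUnitalCStarAlgebra A] [PartialOrder A] [StarOrderedRing A]
    [NormedAddCommGroup E] [NormedSpace ℂ E] [SMul Aᵐᵒᵖ E] [CStarModuleRight A E] [CompleteSpace E]
    (T T' S S' : E →L[ℂ] E)
    (hT : ∀ (x y : E), inner (𝕜 := A) (T x) y = inner (𝕜 := A) x (T' y))
    (hS : ∀ (x y : E), inner (𝕜 := A) (S x) y = inner (𝕜 := A) x (S' y))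
    (hTc : OrthoComplemented (A := A) (closure (Set.range ⇑T')))
    (hrange : Set.range ⇑S ⊆ Set.range ⇑T) :
    (∃ lam : ℝ, 0 < lam ∧ ∀ x : E,
      inner (𝕜 := A) x (S (S' x)) ≤ (lam : ℂ) • inner (𝕜 := A) x (T (T' x))) ∧
    Set.range (⇑S ∘ ⇑S') ⊆ Set.range ⇑T := by
  obtain ⟨C, hTC, hC⟩ := exists_comp_eq_of_range_subset hT hTc hrange
  obtain ⟨C', hC'⟩ := exists_adjoint_of_comp_eq hT hS hTc hTC hC
  have hC'T' : ∀ x, C' (T' x) = S' x := fun x => ext_inner_left fun u => by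
    rw [← hC', ← hT, ← ContinuousLinearMap.comp_apply, hTC, hS]
  refine ⟨⟨‖C ∘L C'‖ + 1, by positivity, fun x => ?_⟩, ?_⟩
  · rw [inner_map_right_eq hS, inner_map_right_eq hT, ← hC'T', Complex.coe_smul]
    calc _ ≤ ‖C ∘L C'‖ • inner A (T' x) (T' x) := inner_adjoint_apply_self_le hC' _
      _ ≤ (‖C ∘L C'‖ + 1) • inner A (T' x) (T' x) :=
        smul_le_smul_of_nonneg_right (by linarith) inner_self_nonneg
  · rintro _ ⟨x, rfl⟩
    exact hrange ⟨S' x, rfl⟩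

/-- If `A, B` are adjointable operators on a Hilbert C*-module whose adjoints have orthogonally
complemented range closures, and `range B ⊆ range A`, then `BB* ≤ λ AA*` for some `λ > 0` and
`range (BB*) ⊆ range A`. -/
theorem stmt_8 {A E : Type*} [NonUnitalCStarAlgebra A] [PartialOrder A] [StarOrderedRing A]
    [NormedAddCommGroup E] [NormedSpace ℂ E] [SMul Aᵐᵒᵖ E] [CStarModuleRight A E] [CompleteSpace E]
    (T T' S S' : E →L[ℂ] E)
    (hT : ∀ (x y : E), inner (𝕜 := A) (T x) y = inner (𝕜 := A) x (T' y))
    (hS : ∀ (x y : E), inner (𝕜 := A) (S x) y = inner (𝕜 := A) x (S' y))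
    (hTc : OrthoComplemented (A := A) (closure (Set.range ⇑T')))
    (hSc : OrthoComplemented (A := A) (closure (Set.range ⇑S')))
    (hrange : Set.range ⇑S ⊆ Set.range ⇑T) :
    (∃ lam : ℝ, 0 < lam ∧ ∀ x : E,
      inner (𝕜 := A) x (S (S' x)) ≤ (lam : ℂ) • inner (𝕜 := A) x (T (T' x))) ∧
    Set.range (⇑S ∘ ⇑S') ⊆ Set.range ⇑T :=
  stmt_8_general T T' S S' hT hS hTc hrange
end

section
/- Let 𝓗 be a complex Hilbert space, M ⊆ B(𝓗) a von Neumann algebra, and A, B ∈ M with A injective and BB* ≤ λ AA* for some λ > 0. Then there exists S ∈ M with AS = B. -/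
/-!
Douglas factorization. `BB* ≤ λAA*` says `‖B* x‖ ≤ √λ ‖A* x‖`, so `A* x ↦ B* x` is a well-defined
bounded map on the range of `A*`; extended by continuity to its closure and by zero on
`(range A*)ᗮ = ker A`, it gives `D` with `D A* = B*`, and `S = D*` solves `A S = B`. An operator `T`
in the commutant `M'` commutes with `A*` and `B*` and preserves `ker A`, hence commutes with `D`;
so `D ∈ M'' = M`.
-/

open scoped InnerProduct

namespace LinearMap

open Submodule

variable {𝕜 E F G : Type*} [RCLike 𝕜] [AddCommGroup E] [Module 𝕜 E]
  [NormedAddCommGroup F] [InnerProductSpace 𝕜 F]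
  [NormedAddCommGroup G] [NormedSpace 𝕜 G] [CompleteSpace G]

theorem norm_apply_le_norm_add_of_mem_orthogonal_range (Y : E →ₗ[𝕜] F) (x : E) {z : F}
    (hz : z ∈ (range Y)ᗮ) : ‖Y x‖ ≤ ‖Y x + z‖ := by
  have hYz : inner 𝕜 (Y x) z = 0 := inner_right_of_mem_orthogonal (mem_range_self Y x) hz
  have := norm_add_sq_eq_norm_sq_add_norm_sq_of_inner_eq_zero _ _ hYz
  nlinarith [norm_nonneg (Y x), norm_nonneg (Y x + z), sq_nonneg ‖z‖]

variable [CompleteSpace F]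

theorem denseRange_coprod_subtype_orthogonal_range (Y : E →ₗ[𝕜] F) :
    DenseRange (Y.coprod (range Y)ᗮ.subtype) := by
  rw [DenseRange, ← coe_range, dense_iff_topologicalClosure_eq_top,
    topologicalClosure_eq_top_iff, range_coprod, range_subtype, ← inf_orthogonal,
    inf_orthogonal_eq_bot]

/-- The extension by continuity of `Y x + z ↦ X x` for `z ∈ (range Y)ᗮ`; these vectors are dense
in `F`, and the map is bounded on them once `‖X x‖ ≤ c ‖Y x‖`. -/
noncomputable def douglasFactor (Y : E →ₗ[𝕜] F) (X : E →ₗ[𝕜] G) : F →L[𝕜] G :=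
  (X ∘ₗ fst 𝕜 E (range Y)ᗮ).extendOfNorm (Y.coprod (range Y)ᗮ.subtype)

variable {Y : E →ₗ[𝕜] F} {X : E →ₗ[𝕜] G} {c : ℝ}

theorem douglasFactor_apply_add (h : ∀ x, ‖X x‖ ≤ c * ‖Y x‖) (x : E) {z : F}
    (hz : z ∈ (range Y)ᗮ) : douglasFactor Y X (Y x + z) = X x := by
  have hbound : ∀ p : E × (range Y)ᗮ,
      ‖(X ∘ₗ fst 𝕜 E (range Y)ᗮ) p‖ ≤ |c| * ‖Y.coprod (range Y)ᗮ.subtype p‖ := fun ⟨x, z⟩ =>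
    calc ‖X x‖ ≤ c * ‖Y x‖ := h x
      _ ≤ |c| * ‖Y x‖ := by gcongr; exact le_abs_self c
      _ ≤ |c| * ‖Y x + z‖ := by
        gcongr; exact Y.norm_apply_le_norm_add_of_mem_orthogonal_range x z.2
  exact extendOfNorm_eq (denseRange_coprod_subtype_orthogonal_range Y) ⟨_, hbound⟩ (x, ⟨z, hz⟩)

theorem douglasFactor_apply (h : ∀ x, ‖X x‖ ≤ c * ‖Y x‖) (x : E) :
    douglasFactor Y X (Y x) = X x := by
  simpa using douglasFactor_apply_add h x (zero_mem _)

theorem douglasFactor_comp_intertwine (h : ∀ x, ‖X x‖ ≤ c * ‖Y x‖) {S : E →ₗ[𝕜] E}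
    {T : F →L[𝕜] F} {U : G →L[𝕜] G} (hY : ∀ x, Y (S x) = T (Y x)) (hX : ∀ x, X (S x) = U (X x))
    (hT : ∀ z ∈ (range Y)ᗮ, T z ∈ (range Y)ᗮ) :
    douglasFactor Y X ∘L T = U ∘L douglasFactor Y X := by
  refine DFunLike.coe_injective <|
    (denseRange_coprod_subtype_orthogonal_range Y).equalizer (by fun_prop) (by fun_prop) ?_
  ext ⟨x, z, hz⟩
  simp [← hY, douglasFactor_apply_add h _ (hT z hz), douglasFactor_apply_add h x hz, hX]

end LinearMap

namespace ContinuousLinearMap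

variable {𝕜 E F : Type*} [RCLike 𝕜] [NormedAddCommGroup E] [InnerProductSpace 𝕜 E]
  [CompleteSpace E] [NormedAddCommGroup F] [InnerProductSpace 𝕜 F] [CompleteSpace F]

theorem norm_apply_le_of_adjoint_comp_self_le {X Y : E →L[𝕜] F} {c : ℝ} (hc : 0 ≤ c)
    (h : X† ∘L X ≤ (c : 𝕜) • (Y† ∘L Y)) (x : E) : ‖X x‖ ≤ √c * ‖Y x‖ := by
  have hsq : ‖X x‖ ^ 2 ≤ c * ‖Y x‖ ^ 2 := by
    have := ((le_def _ _).1 h).re_inner_nonneg_right x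
    simpa [inner_sub_right, inner_smul_right, apply_norm_sq_eq_inner_adjoint_right] using this
  rw [← Real.sqrt_sq (norm_nonneg (X x)), ← Real.sqrt_sq (norm_nonneg (Y x)), ← Real.sqrt_mul hc]
  exact Real.sqrt_le_sqrt hsq

end ContinuousLinearMap

namespace VonNeumannAlgebra

open ContinuousLinearMap

variable {H : Type*} [NormedAddCommGroup H] [InnerProductSpace ℂ H] [CompleteSpace H]

theorem douglasFactor_adjoint_mem {M : VonNeumannAlgebra H} {A B : H →L[ℂ] H} (hA : A ∈ M)
    (hB : B ∈ M) {c : ℝ} (h : ∀ x, ‖(B†) x‖ ≤ c * ‖(A†) x‖) :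
    LinearMap.douglasFactor (A† : H →ₗ[ℂ] H) (B† : H →ₗ[ℂ] H) ∈ M := by
  rw [← M.commutant_commutant, mem_commutant_iff]
  intro T hT
  have hcomm : ∀ a ∈ M, ∀ x, a (T x) = T (a x) := fun a ha x =>
    DFunLike.congr_fun (mem_commutant_iff.1 hT a ha) x
  have hker : ∀ z ∈ (LinearMap.range (A† : H →ₗ[ℂ] H))ᗮ,
      T z ∈ (LinearMap.range (A† : H →ₗ[ℂ] H))ᗮ := by
    simp only [orthogonal_range, adjoint_adjoint, LinearMap.mem_ker, coe_coe]
    intro z hz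
    rw [hcomm A hA, hz, map_zero]
  exact (LinearMap.douglasFactor_comp_intertwine h (hcomm _ (star_mem hA))
    (hcomm _ (star_mem hB)) hker).symm

end VonNeumannAlgebra

theorem stmt_12_general {𝓗 : Type*} [NormedAddCommGroup 𝓗] [InnerProductSpace ℂ 𝓗] [CompleteSpace 𝓗]
    (M : VonNeumannAlgebra 𝓗) (A B : 𝓗 →L[ℂ] 𝓗) (hA : A ∈ M) (hB : B ∈ M)
    (hle : ∃ lam : ℝ, 0 < lam ∧ B * star B ≤ lam • (A * star A)) :
    ∃ S : 𝓗 →L[ℂ] 𝓗, S ∈ M ∧ A * S = B := by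
  obtain ⟨lam, hlam, hle⟩ := hle
  have hbound : ∀ x, ‖(B†) x‖ ≤ √lam * ‖(A†) x‖ :=
    ContinuousLinearMap.norm_apply_le_of_adjoint_comp_self_le hlam.le
      (by simpa [ContinuousLinearMap.star_eq_adjoint, ContinuousLinearMap.mul_def] using hle)
  set D := LinearMap.douglasFactor (A† : 𝓗 →ₗ[ℂ] 𝓗) (B† : 𝓗 →ₗ[ℂ] 𝓗)
  have hDA : D ∘L A† = B† := ContinuousLinearMap.ext (LinearMap.douglasFactor_apply hbound)
  refine ⟨D†, star_mem (VonNeumannAlgebra.douglasFactor_adjoint_mem hA hB hbound), ?_⟩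
  simpa [ContinuousLinearMap.mul_def] using congrArg ContinuousLinearMap.adjoint hDA

/-- If `M` is a von Neumann algebra on a complex Hilbert space, `A, B ∈ M`, `A` is injective and
`BB* ≤ λ AA*` for some `λ > 0`, then there exists `S ∈ M` with `AS = B`. -/
theorem stmt_12 {𝓗 : Type*} [NormedAddCommGroup 𝓗] [InnerProductSpace ℂ 𝓗] [CompleteSpace 𝓗]
    (M : VonNeumannAlgebra 𝓗) (A B : 𝓗 →L[ℂ] 𝓗) (hA : A ∈ M) (hB : B ∈ M)
    (hAinj : Function.Injective (A : 𝓗 → 𝓗))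
    (hle : ∃ lam : ℝ, 0 < lam ∧ B * star B ≤ lam • (A * star A)) :
    ∃ S : 𝓗 →L[ℂ] 𝓗, S ∈ M ∧ A * S = B :=
  stmt_12_general M A B hA hB hle
end

section
/- Let A = C[0,1] and M = {f ∈ A : f(0) = 0}, regarded as Hilbert A-modules. Define Ã, C̃ on E = A ⊕ M by the block matrices Ã = [[0, A],[0,0]] and C̃ = [[C,0],[0,0]], where (Af)(λ) = λf(λ) for f ∈ M and (Cf)(λ) = λf(λ) for f ∈ A. Then C̃C̃* = ÃÃ* but the range of C̃ is not contained in the range of Ã; in particular the function f₀(λ) = λ gives (f₀, 0) ∈ range(C̃) \ range(Ã). -/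
open scoped ComplexOrder

/-- The C*-algebra `A = C[0,1]`. -/
abbrev CA : Type := C(Set.Icc (0:ℝ) 1, ℂ)

/-- The point `0` of `[0,1]`. -/
def pt0 : Set.Icc (0:ℝ) 1 := ⟨0, by norm_num⟩

/-- The maximal ideal `M = {f ∈ C[0,1] : f(0) = 0}`, regarded as a Hilbert `C[0,1]`-module. -/
def MA : Type := {f : CA // f pt0 = 0}

/-- The function `λ ↦ λ` as an element of `C[0,1]`. -/
def g0 : CA := ⟨fun t => ((t : ℝ) : ℂ), Complex.continuous_ofReal.comp continuous_subtype_val⟩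

/-- `E = A ⊕ M` with its `C[0,1]`-valued inner product. -/
noncomputable def innerE (p q : CA × MA) : CA := star p.1 * q.1 + star p.2.1 * q.2.1

/-- `Ã = [[0, A],[0,0]]` where `(Af)(λ) = λ f(λ)` on `M`. -/
noncomputable def Atil (p : CA × MA) : CA × MA :=
  (g0 * p.2.1, ⟨0, by simp⟩)

/-- The adjoint `Ã* = [[0,0],[A*,0]]` where `(A*f)(λ) = λ f(λ)` maps `A` into `M`. -/
noncomputable def AtilStar (p : CA × MA) : CA × MA :=
  (0, ⟨g0 * p.1, by simp [g0, pt0]⟩)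

/-- `C̃ = [[C,0],[0,0]]` where `(Cf)(λ) = λ f(λ)` on `A`; it is self-adjoint. -/
noncomputable def Ctil (p : CA × MA) : CA × MA :=
  (g0 * p.1, ⟨0, by simp⟩)

/-
Ã and C̃ are both "multiplication by λ" placed in different corners, so C̃C̃* and ÃÃ* are the same
multiplication by λ² on the first summand and the identities are direct computations. The range
statement fails because (λ, 0) = Ã(0, f) would force λ f(λ) = λ, so f = 1 on (0,1] and, by
continuity, f(0) = 1, contradicting f ∈ M.
-/

lemma isSelfAdjoint_g0 : IsSelfAdjoint g0 := by
  ext t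
  simp [g0, Complex.conj_ofReal]

lemma g0_apply_ne_zero {t : Set.Icc (0:ℝ) 1} (ht : t ≠ pt0) : g0 t ≠ 0 := by
  change ((t : ℝ) : ℂ) ≠ 0
  exact Complex.ofReal_ne_zero.mpr fun h ↦ ht (Subtype.ext h)

lemma g0_mul_ne_g0 {f : CA} (hf : f pt0 = 0) : g0 * f ≠ g0 := by
  intro h
  have hf_one : Set.EqOn f 1 {pt0}ᶜ := fun t ht ↦ by
    have := congr($h t)
    simp only [ContinuousMap.mul_apply] at this
    exact mul_eq_left₀ (g0_apply_ne_zero ht) |>.mp this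
  -- `[0,1]` has no isolated points, so `{0}ᶜ` is dense
  have hf_eq_one : f = 1 := ContinuousMap.ext_iff.mpr <|
    congrFun <| f.continuous.ext_on (dense_compl_singleton pt0) continuous_const hf_one
  simp [hf_eq_one] at hf

lemma innerE_Atil (p q : CA × MA) : innerE (Atil p) q = innerE p (AtilStar q) := by
  simp only [innerE, Atil, AtilStar, star_mul, isSelfAdjoint_g0.star_eq, star_zero, zero_mul,
    mul_zero, zero_add, add_zero]
  ring

lemma innerE_Ctil (p q : CA × MA) : innerE (Ctil p) q = innerE p (Ctil q) := by
  simp only [innerE, Ctil, star_mul, isSelfAdjoint_g0.star_eq, star_zero, zero_mul, mul_zero,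
    add_zero]
  ring

lemma Ctil_Ctil (p : CA × MA) : Ctil (Ctil p) = Atil (AtilStar p) := by
  simp [Ctil, Atil, AtilStar]

/-- `C̃C̃* = ÃÃ*` (with `C̃* = C̃`), yet the range of `C̃` is not contained in the range of `Ã`;
the element `(f₀, 0)` with `f₀(λ) = λ` lies in `range C̃ \ range Ã`. -/
theorem stmt_14 :
    -- `Ã*` is the adjoint of `Ã`, and `C̃` is self-adjoint
    (∀ p q : CA × MA, innerE (Atil p) q = innerE p (AtilStar q)) ∧
    (∀ p q : CA × MA, innerE (Ctil p) q = innerE p (Ctil q)) ∧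
    -- `C̃C̃* = ÃÃ*`
    (∀ p : CA × MA, Ctil (Ctil p) = Atil (AtilStar p)) ∧
    -- but `range C̃ ⊄ range Ã`, witnessed by `(f₀, 0)`
    (g0, (⟨0, by simp⟩ : MA)) ∈ Set.range Ctil ∧
    (g0, (⟨0, by simp⟩ : MA)) ∉ Set.range Atil ∧
    ¬ Set.range Ctil ⊆ Set.range Atil := by
  have hmem : (g0, (⟨0, by simp⟩ : MA)) ∈ Set.range Ctil :=
    ⟨(1, ⟨0, by simp⟩), by simp [Ctil]; rfl⟩
  have hnot : (g0, (⟨0, by simp⟩ : MA)) ∉ Set.range Atil := fun ⟨p, hp⟩ ↦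
    g0_mul_ne_g0 p.2.2 congr(($hp).1)
  exact ⟨innerE_Atil, innerE_Ctil, Ctil_Ctil, hmem, hnot, fun h ↦ hnot (h hmem)⟩
end
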